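/- arXiv:1410.1221 — 4 statements merged into one kernel-verified Lean document; each statement's English description precedes it below -/
import Mathlib

section
/- Let Γ_prior be symmetric positive definite, H_misfit symmetric positive semidefinite, and suppose H_misfit = V_r Λ_r V_r^T exactly for some Λ_r = diag(λ_i) with λ_i > 0 and V_r = Γ_prior^{-1} W_r satisfying W_r^T Γ_prior^{-1} W_r = I_r. Then (H_misfit + Γ_prior^{-1})^{-1} = Γ_prior - W_r D_r W_r^T, where D_r = diag(λ_i/(λ_i+1)). -/
open Matrix

theorem stmt_3 (n r : ℕ) (Γprior Hmisfit : Matrix (Fin n) (Fin n) ℝ)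
    (Wr : Matrix (Fin n) (Fin r) ℝ) (Λ : Fin r → ℝ)
    (hΓ : Γprior.PosDef) (hH : Hmisfit.PosSemidef) (hΛ : ∀ i, 0 < Λ i)
    (hnorm : Wrᵀ * Γprior⁻¹ * Wr = 1)
    (hdecomp : Hmisfit = (Γprior⁻¹ * Wr) * Matrix.diagonal Λ * (Γprior⁻¹ * Wr)ᵀ) :
    (Hmisfit + Γprior⁻¹)⁻¹ =
      Γprior - Wr * Matrix.diagonal (fun i => Λ i / (Λ i + 1)) * Wrᵀ := by
  have hPT : Γpriorᵀ = Γprior := hΓ.isHermitian.eq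
  have hdet : IsUnit Γprior.det := isUnit_iff_ne_zero.mpr (ne_of_gt hΓ.det_pos)
  have hinv : Γprior⁻¹ * Γprior = 1 := Matrix.nonsing_inv_mul _ hdet
  have hinvT : Γprior⁻¹ᵀ = Γprior⁻¹ := by
    rw [Matrix.transpose_nonsing_inv, hPT]
  apply Matrix.inv_eq_right_inv
  set D := Matrix.diagonal (fun i => Λ i / (Λ i + 1)) with hD
  have key : Matrix.diagonal Λ * D + D = Matrix.diagonal Λ := by
    rw [hD, Matrix.diagonal_mul_diagonal, Matrix.diagonal_add]
    have : (fun i => Λ i * (Λ i / (Λ i + 1)) + Λ i / (Λ i + 1)) = Λ := by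
      funext i
      have h1 : Λ i + 1 ≠ 0 := by have := hΛ i; positivity
      field_simp
    rw [this]
  rw [hdecomp, Matrix.transpose_mul, hinvT]
  simp only [Matrix.add_mul, Matrix.mul_sub, Matrix.mul_assoc, hinv, Matrix.mul_one]
  have hn2 : Wrᵀ * (Γprior⁻¹ * (Wr * (D * Wrᵀ))) = D * Wrᵀ := by
    rw [← Matrix.mul_assoc, ← Matrix.mul_assoc, hnorm, Matrix.one_mul]
  rw [hn2]
  have hzero : Matrix.diagonal Λ * Wrᵀ - Matrix.diagonal Λ * (D * Wrᵀ) - D * Wrᵀ = 0 := by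
    rw [← Matrix.mul_assoc, ← Matrix.sub_mul, ← Matrix.sub_mul]
    have : Matrix.diagonal Λ - Matrix.diagonal Λ * D - D = 0 := by
      rw [sub_sub, key, sub_self]
    rw [this, Matrix.zero_mul]
  have expand : Γprior⁻¹ * (Wr * (Matrix.diagonal Λ * Wrᵀ)) -
      Γprior⁻¹ * (Wr * (Matrix.diagonal Λ * (D * Wrᵀ))) - Γprior⁻¹ * (Wr * (D * Wrᵀ)) = 0 := by
    rw [← Matrix.mul_sub, ← Matrix.mul_sub, ← Matrix.mul_sub, ← Matrix.mul_sub, hzero,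
      Matrix.mul_zero, Matrix.mul_zero]
  have := sub_eq_zero.mp expand
  linear_combination (norm := abel) this
end

section
/- With the notation of the low-rank posterior formula, the matrix Γ_post = Γ_prior - W_r D_r W_r^T is symmetric positive definite, and Γ_post ≼ Γ_prior in the Loewner order; i.e., the posterior covariance is never larger than the prior covariance. -/
open Matrix

theorem stmt_4 (n r : ℕ) (Γprior : Matrix (Fin n) (Fin n) ℝ)
    (Wr : Matrix (Fin n) (Fin r) ℝ) (Λ : Fin r → ℝ)
    (hΓ : Γprior.PosDef) (hΛ : ∀ i, 0 < Λ i)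
    (hnorm : Wrᵀ * Γprior⁻¹ * Wr = 1) :
    (Γprior - Wr * Matrix.diagonal (fun i => Λ i / (Λ i + 1)) * Wrᵀ).PosDef ∧
    (Γprior - (Γprior - Wr * Matrix.diagonal (fun i => Λ i / (Λ i + 1)) * Wrᵀ)).PosSemidef := by
  set d : Fin r → ℝ := fun i => Λ i / (Λ i + 1) with hd
  have hd01 : ∀ i, 0 < d i ∧ d i < 1 := by
    intro i
    have h1 : 0 < Λ i + 1 := by linarith [hΛ i]
    constructor
    · exact div_pos (hΛ i) h1
    · rw [div_lt_one h1]; linarith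
  have hdet : IsUnit Γprior.det := hΓ.det_pos.ne'.isUnit
  have hSP : Γprior⁻¹ * Γprior = 1 := Matrix.nonsing_inv_mul _ hdet
  have hPS : Γprior * Γprior⁻¹ = 1 := Matrix.mul_nonsing_inv _ hdet
  have hSsym : (Γprior⁻¹)ᵀ = Γprior⁻¹ := by
    have := hΓ.isHermitian.inv.eq
    rwa [Matrix.conjTranspose_eq_transpose_of_trivial] at this
  -- Wr * D * Wrᵀ is PSD
  have hWDW : (Wr * Matrix.diagonal d * Wrᵀ).PosSemidef := by
    have hD : (Matrix.diagonal d).PosSemidef :=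
      Matrix.posSemidef_diagonal_iff.mpr fun i => (hd01 i).1.le
    have := hD.mul_mul_conjTranspose_same Wr
    rwa [Matrix.conjTranspose_eq_transpose_of_trivial] at this
  -- Γprior - Wr * Wrᵀ is PSD
  have hM0 : (Γprior - Wr * Wrᵀ).PosSemidef := by
    set A : Matrix (Fin n) (Fin n) ℝ := 1 - Wr * Wrᵀ * Γprior⁻¹ with hA
    have hAT : Aᵀ = 1 - Γprior⁻¹ * (Wr * Wrᵀ) := by
      simp [hA, Matrix.transpose_sub, Matrix.transpose_mul, hSsym, Matrix.mul_assoc]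
    have hPS' : ∀ X : Matrix (Fin n) (Fin n) ℝ, Γprior * (Γprior⁻¹ * X) = X := by
      intro X; rw [← Matrix.mul_assoc, hPS, Matrix.one_mul]
    have hSP' : ∀ X : Matrix (Fin n) (Fin n) ℝ, Γprior⁻¹ * (Γprior * X) = X := by
      intro X; rw [← Matrix.mul_assoc, hSP, Matrix.one_mul]
    have hnorm' : ∀ X : Matrix (Fin r) (Fin n) ℝ, Wrᵀ * (Γprior⁻¹ * (Wr * X)) = X := by
      intro X; rw [← Matrix.mul_assoc, ← Matrix.mul_assoc, hnorm, Matrix.one_mul]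
    have key : A * Γprior * Aᵀ = Γprior - Wr * Wrᵀ := by
      rw [hAT, hA]
      simp only [Matrix.sub_mul, Matrix.mul_sub, Matrix.one_mul, Matrix.mul_one,
        Matrix.mul_assoc, hSP, hPS', hSP', hnorm']
      abel
    have := hΓ.posSemidef.mul_mul_conjTranspose_same A
    rwa [Matrix.conjTranspose_eq_transpose_of_trivial, key] at this
  -- quadratic form identity
  have quad : ∀ (M : Matrix (Fin r) (Fin r) ℝ) (x : Fin n → ℝ),
      x ⬝ᵥ ((Wr * M * Wrᵀ) *ᵥ x) = (Wrᵀ *ᵥ x) ⬝ᵥ (M *ᵥ (Wrᵀ *ᵥ x)) := by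
    intro M x
    rw [← Matrix.mulVec_mulVec, ← Matrix.mulVec_mulVec, Matrix.dotProduct_mulVec,
      ← Matrix.mulVec_transpose]
  refine ⟨posDef_iff_dotProduct_mulVec.mpr ⟨?_, ?_⟩, ?_⟩
  · exact hΓ.isHermitian.sub hWDW.isHermitian
  · intro x hx
    simp only [star_trivial]
    have hform : x ⬝ᵥ ((Γprior - Wr * Matrix.diagonal d * Wrᵀ) *ᵥ x)
        = x ⬝ᵥ (Γprior *ᵥ x) - (Wrᵀ *ᵥ x) ⬝ᵥ (Matrix.diagonal d *ᵥ (Wrᵀ *ᵥ x)) := by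
      rw [Matrix.sub_mulVec, dotProduct_sub, quad]
    rw [hform]
    set y := Wrᵀ *ᵥ x with hy
    have hDy : y ⬝ᵥ (Matrix.diagonal d *ᵥ y) = ∑ i, d i * (y i * y i) := by
      simp only [dotProduct, Matrix.mulVec_diagonal]
      exact Finset.sum_congr rfl fun i _ => by ring
    have hyy : y ⬝ᵥ y = ∑ i, y i * y i := rfl
    by_cases hy0 : y = 0
    · have hP := hΓ.dotProduct_mulVec_pos hx
      simp only [star_trivial] at hP
      rw [hy0]
      simpa using hP
    · -- y ≠ 0 : strict inequality y ⬝ᵥ D y < y ⬝ᵥ y ≤ x ⬝ᵥ Γprior x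
      have hM0x := hM0.dotProduct_mulVec_nonneg x
      simp only [star_trivial] at hM0x
      have hsplit : x ⬝ᵥ ((Γprior - Wr * Wrᵀ) *ᵥ x)
          = x ⬝ᵥ (Γprior *ᵥ x) - y ⬝ᵥ y := by
        rw [Matrix.sub_mulVec, dotProduct_sub]
        congr 1
        have := quad 1 x
        simpa using this
      rw [hsplit] at hM0x
      have hyle : y ⬝ᵥ (Matrix.diagonal d *ᵥ y) < y ⬝ᵥ y := by
        rw [hDy, hyy]
        obtain ⟨i, hi⟩ := Function.ne_iff.mp hy0
        refine Finset.sum_lt_sum (fun j _ => ?_) ⟨i, Finset.mem_univ i, ?_⟩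
        · have := mul_nonneg (mul_self_nonneg (y j)) ((hd01 j).1.le)
          nlinarith [(hd01 j).2, mul_self_nonneg (y j), (hd01 j).1]
        · have hyi : 0 < y i * y i := mul_self_pos.mpr hi
          nlinarith [(hd01 i).2]
      linarith
  · rw [sub_sub_cancel]
    exact hWDW
end

section
/- Let A be symmetric positive semidefinite with eigenvalues λ_1 ≥ … ≥ λ_n ≥ 0 and spectral decomposition A = Σ_i λ_i w_i w_i^T (orthonormal w_i). Then for A_r = Σ_{i≤r} λ_i w_i w_i^T, the operator-norm error satisfies ‖(I+A)^{-1} - (I - A_r(I+A_r)^{-1})‖ ≤ λ_{r+1}/(1+λ_{r+1}). -/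
open Matrix
open scoped Matrix.Norms.L2Operator

private lemma my_dot_conj {n : ℕ} (W : Matrix (Fin n) (Fin n) ℝ) (hW : W * Wᵀ = 1)
    (z : Fin n → ℝ) : (Wᵀ *ᵥ z) ⬝ᵥ (Wᵀ *ᵥ z) = z ⬝ᵥ z := by
  rw [Matrix.dotProduct_mulVec, Matrix.vecMul_transpose, Matrix.mulVec_mulVec, hW,
    Matrix.one_mulVec]

private lemma my_key_norm {n : ℕ} (W : Matrix (Fin n) (Fin n) ℝ) (hW : W * Wᵀ = 1)
    (d : Fin n → ℝ) (C : ℝ) (hC : 0 ≤ C) (hd : ∀ i, |d i| ≤ C) :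
    ‖Wᵀ * Matrix.diagonal d * W‖ ≤ C := by
  rw [Matrix.l2_opNorm_def]
  apply ContinuousLinearMap.opNorm_le_bound _ hC
  intro x
  set u : Fin n → ℝ := (WithLp.equiv 2 (Fin n → ℝ)) x with hu
  set v : Fin n → ℝ := W *ᵥ u with hv
  have hnorm : ∀ y : EuclideanSpace ℝ (Fin n), ‖y‖ = Real.sqrt (∑ i, (y i)^2) := by
    intro y; rw [EuclideanSpace.norm_eq]; simp [Real.norm_eq_abs, sq_abs]
  rw [hnorm, hnorm]
  show Real.sqrt (∑ i, (((Wᵀ * Matrix.diagonal d * W) *ᵥ u) i)^2)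
      ≤ C * Real.sqrt (∑ i, (u i)^2)
  have hdot : ∀ z : Fin n → ℝ, z ⬝ᵥ z = ∑ i, (z i)^2 := by
    intro z; simp [dotProduct, sq]
  have h1 : (∑ i, (((Wᵀ * Matrix.diagonal d * W) *ᵥ u) i)^2)
      = ∑ i, (d i * v i)^2 := by
    rw [← hdot, ← hdot]
    have h : (Wᵀ * Matrix.diagonal d * W) *ᵥ u = Wᵀ *ᵥ (Matrix.diagonal d *ᵥ v) := by
      rw [hv, Matrix.mulVec_mulVec, Matrix.mulVec_mulVec]
    rw [h, my_dot_conj W hW]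
    simp [Matrix.mulVec_diagonal, dotProduct]
  have h2 : (∑ i, (u i)^2) = ∑ i, (v i)^2 := by
    rw [← hdot, ← hdot, hv]
    have hW' : Wᵀ * W = 1 := mul_eq_one_comm.mp hW
    have := my_dot_conj Wᵀ (by rwa [Matrix.transpose_transpose]) u
    rw [Matrix.transpose_transpose] at this
    exact this.symm
  rw [h1, h2]
  calc Real.sqrt (∑ i, (d i * v i)^2) ≤ Real.sqrt (∑ i, C^2 * (v i)^2) := by
        apply Real.sqrt_le_sqrt
        apply Finset.sum_le_sum
        intro i _
        rw [mul_pow]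
        have : (d i)^2 ≤ C^2 := by
          rw [← sq_abs]; exact pow_le_pow_left₀ (abs_nonneg _) (hd i) 2
        nlinarith [sq_nonneg (v i)]
    _ = C * Real.sqrt (∑ i, (v i)^2) := by
        rw [← Finset.mul_sum, Real.sqrt_mul (sq_nonneg C), Real.sqrt_sq hC]

private lemma my_conj_sum {n : ℕ} (w : Fin n → (Fin n → ℝ)) (c : Fin n → ℝ) :
    ∑ i, c i • Matrix.vecMulVec (w i) (w i)
      = (Matrix.of w)ᵀ * Matrix.diagonal c * Matrix.of w := by
  ext a b
  rw [Matrix.mul_apply]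
  simp only [Matrix.mul_diagonal, Matrix.transpose_apply, Matrix.of_apply,
    Matrix.sum_apply, Matrix.smul_apply, Matrix.vecMulVec_apply, smul_eq_mul]
  exact Finset.sum_congr rfl fun i _ => by ring

private lemma my_conj_mul {n : ℕ} (W : Matrix (Fin n) (Fin n) ℝ) (hW : W * Wᵀ = 1)
    (c c' : Fin n → ℝ) :
    (Wᵀ * Matrix.diagonal c * W) * (Wᵀ * Matrix.diagonal c' * W)
      = Wᵀ * Matrix.diagonal (fun i => c i * c' i) * W := by
  have h : Matrix.diagonal c * (W * Wᵀ) * Matrix.diagonal c'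
      = Matrix.diagonal (fun i => c i * c' i) := by
    rw [hW, mul_one, Matrix.diagonal_mul_diagonal]
  calc (Wᵀ * Matrix.diagonal c * W) * (Wᵀ * Matrix.diagonal c' * W)
      = Wᵀ * (Matrix.diagonal c * (W * Wᵀ) * Matrix.diagonal c') * W := by
        simp only [Matrix.mul_assoc]
    _ = _ := by rw [h]

private lemma my_conj_one {n : ℕ} (W : Matrix (Fin n) (Fin n) ℝ) (hW' : Wᵀ * W = 1) :
    (1 : Matrix (Fin n) (Fin n) ℝ) = Wᵀ * Matrix.diagonal (fun _ => (1:ℝ)) * W := by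
  rw [Matrix.diagonal_one, mul_one, hW']

private lemma my_conj_add {n : ℕ} (W : Matrix (Fin n) (Fin n) ℝ) (c c' : Fin n → ℝ) :
    (Wᵀ * Matrix.diagonal c * W) + (Wᵀ * Matrix.diagonal c' * W)
      = Wᵀ * Matrix.diagonal (fun i => c i + c' i) * W := by
  rw [← Matrix.add_mul, ← Matrix.mul_add, ← Matrix.diagonal_add]

private lemma my_conj_sub {n : ℕ} (W : Matrix (Fin n) (Fin n) ℝ) (c c' : Fin n → ℝ) :
    (Wᵀ * Matrix.diagonal c * W) - (Wᵀ * Matrix.diagonal c' * W)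
      = Wᵀ * Matrix.diagonal (fun i => c i - c' i) * W := by
  rw [← Matrix.sub_mul, ← Matrix.mul_sub, ← Matrix.diagonal_sub]

private lemma my_conj_inv {n : ℕ} (W : Matrix (Fin n) (Fin n) ℝ) (hW : W * Wᵀ = 1)
    (e : Fin n → ℝ) (he : ∀ i, e i ≠ 0) :
    (Wᵀ * Matrix.diagonal e * W)⁻¹ = Wᵀ * Matrix.diagonal (fun i => (e i)⁻¹) * W := by
  apply Matrix.inv_eq_right_inv
  rw [my_conj_mul W hW]
  have h : (fun i => e i * (e i)⁻¹) = fun _ => (1:ℝ) := by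
    funext i; exact mul_inv_cancel₀ (he i)
  rw [h, ← my_conj_one W (mul_eq_one_comm.mp hW)]

theorem stmt_13 (n : ℕ) (Λ : Fin n → ℝ) (w : Fin n → (Fin n → ℝ))
    (hortho : ∀ i j, w i ⬝ᵥ w j = if i = j then (1:ℝ) else 0)
    (hmono : Antitone Λ) (hnonneg : ∀ i, 0 ≤ Λ i)
    (r : ℕ) (hr : r < n) :
    let A : Matrix (Fin n) (Fin n) ℝ := ∑ i, Λ i • Matrix.vecMulVec (w i) (w i)
    let Ar : Matrix (Fin n) (Fin n) ℝ :=
      ∑ i ∈ Finset.univ.filter (fun i : Fin n => (i : ℕ) < r), Λ i • Matrix.vecMulVec (w i) (w i)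
    ‖(1 + A)⁻¹ - (1 - Ar * (1 + Ar)⁻¹)‖ ≤ Λ ⟨r, hr⟩ / (1 + Λ ⟨r, hr⟩) := by
  intro A Ar
  set W : Matrix (Fin n) (Fin n) ℝ := Matrix.of w with hWdef
  have hW : W * Wᵀ = 1 := by
    ext i j
    simpa [hWdef, Matrix.mul_apply, Matrix.one_apply, dotProduct] using hortho i j
  have hW' : Wᵀ * W = 1 := mul_eq_one_comm.mp hW
  set c : Fin n → ℝ := fun i => if (i : ℕ) < r then Λ i else 0 with hcdef
  have hcnonneg : ∀ i, 0 ≤ c i := by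
    intro i; by_cases h : (i : ℕ) < r <;> simp [hcdef, h, hnonneg i]
  have hpos : ∀ i, (0:ℝ) < 1 + Λ i := fun i => by linarith [hnonneg i]
  have hcpos : ∀ i, (0:ℝ) < 1 + c i := fun i => by linarith [hcnonneg i]
  have hA : A = Wᵀ * Matrix.diagonal Λ * W := my_conj_sum w Λ
  have hAr : Ar = Wᵀ * Matrix.diagonal c * W := by
    show (∑ i ∈ Finset.univ.filter (fun i : Fin n => (i : ℕ) < r),
        Λ i • Matrix.vecMulVec (w i) (w i)) = _
    rw [Finset.sum_filter, ← my_conj_sum w c]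
    refine Finset.sum_congr rfl fun i _ => ?_
    by_cases h : (i : ℕ) < r <;> simp [hcdef, h]
  have h1A : 1 + A = Wᵀ * Matrix.diagonal (fun i => 1 + Λ i) * W := by
    rw [hA, my_conj_one W hW', my_conj_add]
  have h1Ar : 1 + Ar = Wᵀ * Matrix.diagonal (fun i => 1 + c i) * W := by
    rw [hAr, my_conj_one W hW', my_conj_add]
  have hinvA : (1 + A)⁻¹ = Wᵀ * Matrix.diagonal (fun i => (1 + Λ i)⁻¹) * W := by
    rw [h1A, my_conj_inv W hW _ (fun i => (hpos i).ne')]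
  have hinvAr : (1 + Ar)⁻¹ = Wᵀ * Matrix.diagonal (fun i => (1 + c i)⁻¹) * W := by
    rw [h1Ar, my_conj_inv W hW _ (fun i => (hcpos i).ne')]
  have hprod : Ar * (1 + Ar)⁻¹
      = Wᵀ * Matrix.diagonal (fun i => c i * (1 + c i)⁻¹) * W := by
    rw [hinvAr, hAr, my_conj_mul W hW]
  have hfinal : (1 + A)⁻¹ - (1 - Ar * (1 + Ar)⁻¹)
      = Wᵀ * Matrix.diagonal
          (fun i => (1 + Λ i)⁻¹ - (1 - c i * (1 + c i)⁻¹)) * W := by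
    rw [hinvA, hprod, my_conj_one W hW', my_conj_sub, my_conj_sub]
  rw [hfinal]
  apply my_key_norm W hW
  · exact div_nonneg (hnonneg _) (hpos _).le
  · intro i
    by_cases h : (i : ℕ) < r
    · have hc : c i = Λ i := by simp [hcdef, h]
      have hz : (1 + Λ i)⁻¹ - (1 - c i * (1 + c i)⁻¹) = 0 := by
        rw [hc]; have := hpos i; field_simp; ring
      rw [hz, abs_zero]
      exact div_nonneg (hnonneg _) (hpos _).le
    · have hc : c i = 0 := by simp [hcdef, h]
      have hz : (1 + Λ i)⁻¹ - (1 - c i * (1 + c i)⁻¹) = -(Λ i / (1 + Λ i)) := by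
        rw [hc]; have := hpos i; field_simp; ring
      rw [hz, abs_neg, abs_of_nonneg (div_nonneg (hnonneg _) (hpos _).le)]
      have hle : Λ i ≤ Λ ⟨r, hr⟩ := hmono (by exact_mod_cast not_lt.mp h)
      rw [div_le_div_iff₀ (hpos i) (hpos ⟨r, hr⟩)]
      nlinarith [hnonneg i, hnonneg ⟨r, hr⟩]
end

section
/- Let η(u) = ½ A^{-1/n} ε_II^{(1-n)/(2n)} with ε_II = ½ tr(ε̇(u)²) > 0, n ≥ 1, A > 0, where ε̇(u) is the symmetric strain-rate tensor. Then the fourth-order linearized viscosity tensor 2η(u)(𝕀 + ((1-n)/n)(ε̇⊗ε̇)/(ε̇·ε̇)) acting on symmetric matrices is symmetric (self-adjoint with respect to the Frobenius inner product) and positive semidefinite: for any symmetric matrix τ, 2η(u)(τ·τ + ((1-n)/n)(ε̇·τ)²/(ε̇·ε̇)) ≥ (2η(u)/n) τ·τ ≥ 0. -/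
open Matrix

/-- Frobenius inner product of matrices. -/
noncomputable def fdot {k : ℕ} (M N : Matrix (Fin k) (Fin k) ℝ) : ℝ := Matrix.trace (Mᵀ * N)

lemma fdot_eq_sum {k : ℕ} (M N : Matrix (Fin k) (Fin k) ℝ) :
    fdot M N = ∑ p : Fin k × Fin k, M p.2 p.1 * N p.2 p.1 := by
  simp [fdot, Matrix.trace, Matrix.mul_apply, Matrix.diag, Fintype.sum_prod_type]

lemma fdot_comm {k : ℕ} (M N : Matrix (Fin k) (Fin k) ℝ) : fdot M N = fdot N M := by
  simp only [fdot_eq_sum]; exact Finset.sum_congr rfl fun p _ => mul_comm _ _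

lemma fdot_add_left {k : ℕ} (M N P : Matrix (Fin k) (Fin k) ℝ) :
    fdot (M + N) P = fdot M P + fdot N P := by
  simp only [fdot_eq_sum, Matrix.add_apply, ← Finset.sum_add_distrib]
  exact Finset.sum_congr rfl fun p _ => by ring

lemma fdot_smul_left {k : ℕ} (a : ℝ) (M P : Matrix (Fin k) (Fin k) ℝ) :
    fdot (a • M) P = a * fdot M P := by
  simp only [fdot_eq_sum, Matrix.smul_apply, smul_eq_mul, Finset.mul_sum]
  exact Finset.sum_congr rfl fun p _ => by ring

lemma fdot_nonneg {k : ℕ} (M : Matrix (Fin k) (Fin k) ℝ) : 0 ≤ fdot M M := by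
  rw [fdot_eq_sum]; exact Finset.sum_nonneg fun p _ => mul_self_nonneg _

lemma fdot_sq_le {k : ℕ} (M N : Matrix (Fin k) (Fin k) ℝ) :
    (fdot M N) ^ 2 ≤ fdot M M * fdot N N := by
  simp only [fdot_eq_sum]
  have h := Finset.sum_mul_sq_le_sq_mul_sq Finset.univ
    (fun p : Fin k × Fin k => M p.2 p.1) (fun p => N p.2 p.1)
  simpa [sq] using h

theorem stmt_16 (A n : ℝ) (hA : 0 < A) (hn : 1 ≤ n)
    (ε : Matrix (Fin 3) (Fin 3) ℝ) (hεsym : ε.IsSymm)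
    (hεII : 0 < (1/2) * Matrix.trace (ε * ε)) :
    let η : ℝ := (1/2) * A ^ (-(1/n)) * ((1/2) * Matrix.trace (ε * ε)) ^ ((1 - n) / (2 * n))
    let L : Matrix (Fin 3) (Fin 3) ℝ → Matrix (Fin 3) (Fin 3) ℝ :=
      fun τ => (2 * η) • (τ + (((1 - n) / n) * (fdot ε τ / fdot ε ε)) • ε)
    (∀ τ σ' : Matrix (Fin 3) (Fin 3) ℝ, τ.IsSymm → σ'.IsSymm →
      fdot (L τ) σ' = fdot τ (L σ')) ∧
    (∀ τ : Matrix (Fin 3) (Fin 3) ℝ, τ.IsSymm →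
      (2 * η / n) * fdot τ τ ≤
        2 * η * (fdot τ τ + ((1 - n) / n) * (fdot ε τ) ^ 2 / fdot ε ε) ∧
      0 ≤ (2 * η / n) * fdot τ τ) := by
  intro η L
  have hn0 : 0 < n := lt_of_lt_of_le one_pos hn
  have hη : 0 < η := by
    have h1 : 0 < A ^ (-(1/n)) := Real.rpow_pos_of_pos hA _
    have h2 : 0 < ((1/2) * Matrix.trace (ε * ε)) ^ ((1 - n) / (2 * n)) :=
      Real.rpow_pos_of_pos hεII _
    positivity
  have hee : 0 < fdot ε ε := by
    have : fdot ε ε = Matrix.trace (ε * ε) := by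
      unfold fdot; rw [hεsym.eq]
    rw [this]; linarith
  constructor
  · intro τ σ' _ _
    show fdot ((2 * η) • (τ + (((1 - n) / n) * (fdot ε τ / fdot ε ε)) • ε)) σ'
        = fdot τ ((2 * η) • (σ' + (((1 - n) / n) * (fdot ε σ' / fdot ε ε)) • ε))
    rw [fdot_comm τ, fdot_smul_left, fdot_smul_left, fdot_add_left, fdot_add_left,
      fdot_smul_left, fdot_smul_left, fdot_comm σ' τ, fdot_comm ε σ']
    ring
  · intro τ _
    have ht : 0 ≤ fdot τ τ := fdot_nonneg τ
    have hcs : (fdot ε τ) ^ 2 ≤ fdot ε ε * fdot τ τ := fdot_sq_le ε τ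
    constructor
    · have h1 : 0 ≤ 1 - 1/n := by
        have : 1/n ≤ 1 := by rw [div_le_one hn0]; linarith
        linarith
      have key : (fdot ε τ) ^ 2 / fdot ε ε ≤ fdot τ τ := by
        rw [div_le_iff₀ hee]; nlinarith
      have hmain : (1/n) * fdot τ τ ≤ fdot τ τ + (1-n)/n * ((fdot ε τ)^2 / fdot ε ε) := by
        have h1n : (1 - n) / n = 1/n - 1 := by field_simp
        rw [h1n]
        nlinarith [mul_nonneg h1 (sub_nonneg.2 key)]
      calc (2*η/n) * fdot τ τ = 2*η*((1/n) * fdot τ τ) := by ring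
        _ ≤ 2*η*(fdot τ τ + (1-n)/n * ((fdot ε τ)^2 / fdot ε ε)) :=
            mul_le_mul_of_nonneg_left hmain (by positivity)
        _ = 2*η*(fdot τ τ + (1-n)/n * (fdot ε τ)^2 / fdot ε ε) := by ring
    · positivity
end
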